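/- Assume σ ≠ 0. The conditional expectation of the number of old blocks re-observed, given only the number of blocks, satisfies E[R | K_n = j] = j − (1/C(n,j;σ))·Σ_{s=1}^{n−(j−1)} binom(n,s)·C(s,1;σ)·C(n−s, j−1; σ)·Σ_{k=0}^{m} (V_{n+m,j+k}/V_{n,j})·C(m, k; σ, −n + s + (j−1)σ)/σ^k. -/
import Mathlib


open Finset

attribute [local instance] Classical.propDecidable

noncomputable section

/-- Rising factorial `x(x+1)⋯(x+N−1)`. -/
def risingFac (x : ℝ) (N : ℕ) : ℝ := ∏ i ∈ Finset.range N, (x + i)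

/-- Falling factorial `x(x−1)⋯(x−N+1)`. -/
def fallingFac (x : ℝ) (N : ℕ) : ℝ := ∏ i ∈ Finset.range N, (x - i)

/-- Noncentral generalized factorial coefficient `C(N,k;σ,γ)`. -/
def gfc (N k : ℕ) (σ γ : ℝ) : ℝ :=
  (1 / (Nat.factorial k : ℝ)) *
    ∑ i ∈ Finset.range (k + 1),
      (-1 : ℝ) ^ i * (Nat.choose k i : ℝ) * risingFac (-(i : ℝ) * σ - γ) N

/-- Central generalized factorial coefficient `C(N,k;σ)`. -/
def cgfc (N k : ℕ) (σ : ℝ) : ℝ := gfc N k σ 0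

/-- Binomial coefficient over `ℤ`, zero unless `0 ≤ b ≤ a`. -/
def ibinom (a b : ℤ) : ℝ :=
  if 0 ≤ b ∧ b ≤ a then (Nat.choose a.toNat b.toNat : ℝ) else 0

/-- Multinomial coefficient `m!/((l!)^r (m−rl)!)`, zero if `rl > m`. -/
def multinom (m l r : ℕ) : ℝ :=
  if r * l ≤ m then
    (Nat.factorial m : ℝ) / ((Nat.factorial l : ℝ) ^ r * (Nat.factorial (m - r * l) : ℝ))
  else 0

/-- `P` is a set partition of the finset `s`. -/
def IsPartOn {α : Type*} (s : Finset α) (P : Finset (Finset α)) : Prop :=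
  (∀ B ∈ P, B ⊆ s) ∧ ∅ ∉ P ∧ ∀ a ∈ s, ∃! B, B ∈ P ∧ a ∈ B

/-- Restriction of a partition to `s`. -/
def restrictPart {α : Type*} [DecidableEq α] (P : Finset (Finset α)) (s : Finset α) :
    Finset (Finset α) := (P.image fun C => C ∩ s).erase ∅

/-- Gibbs probability of a partition with block sizes `|C|` and `VN k` the Gibbs weight. -/
def gibbsW {α : Type*} (σ : ℝ) (VN : ℕ → ℝ) (P : Finset (Finset α)) : ℝ :=
  VN P.card * ∏ C ∈ P, risingFac (1 - σ) (C.card - 1)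

/-- Ewens–Pitman weight system. -/
def EPV (σ θ : ℝ) : ℕ → ℕ → ℝ :=
  fun N k => (∏ i ∈ Finset.range k, (θ + (i : ℝ) * σ)) / risingFac θ N

/-- The "old" elements `{1,…,n}` inside `{1,…,n+m}`. -/
def oldSet (n m : ℕ) : Finset (Fin (n + m)) :=
  Finset.univ.filter fun x => (x : ℕ) < n

/-- Number of new elements in the block of `ρ` containing the old block `Bi`. -/
def Scount (n m : ℕ) (Bi : Finset (Fin (n + m))) (ρ : Finset (Finset (Fin (n + m)))) : ℕ :=
  ∑ C ∈ ρ.filter (fun C => Bi ⊆ C), (C \ oldSet n m).card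

/-- Partitions of `{1,…,n+m}` extending the partition `πP` of the old elements. -/
def extensions (n m : ℕ) (πP : Finset (Finset (Fin (n + m)))) :
    Finset (Finset (Finset (Fin (n + m)))) :=
  Finset.univ.filter fun ρ => IsPartOn Finset.univ ρ ∧ restrictPart ρ (oldSet n m) = πP

/-- Conditional expectation given complete information (the initial partition `πP`). -/
def condExpPi (σ : ℝ) (V : ℕ → ℕ → ℝ) (n m : ℕ) (πP : Finset (Finset (Fin (n + m))))
    (f : Finset (Finset (Fin (n + m))) → ℝ) : ℝ :=
  (∑ ρ ∈ extensions n m πP, f ρ * gibbsW σ (V (n + m)) ρ) /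
    (∑ ρ ∈ extensions n m πP, gibbsW σ (V (n + m)) ρ)

/-- Partitions of `{1,…,n+m}` whose restriction to the old elements has exactly `j` blocks. -/
def withJ (n m j : ℕ) : Finset (Finset (Finset (Fin (n + m)))) :=
  Finset.univ.filter fun ρ =>
    IsPartOn Finset.univ ρ ∧ (restrictPart ρ (oldSet n m)).card = j

/-- Partitions of `s` with exactly `j` blocks. -/
def partsJOf {α : Type*} [Fintype α] (s : Finset α) (j : ℕ) :
    Finset (Finset (Finset α)) :=
  Finset.univ.filter fun π' => IsPartOn s π' ∧ π'.card = j

/-- Conditional expectation given the incomplete information `K_n = j`. -/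
def condExpK (σ : ℝ) (V : ℕ → ℕ → ℝ) (n m j : ℕ)
    (f : Finset (Finset (Fin (n + m))) → ℝ) : ℝ :=
  (∑ ρ ∈ withJ n m j, f ρ * gibbsW σ (V (n + m)) ρ) /
    (∑ π' ∈ partsJOf (oldSet n m) j, gibbsW σ (V n) π')

/-- Number of old blocks (indexed by `B`) re-observed in the additional sample. -/
def RcntB (n m j : ℕ) (B : Fin j → Finset (Fin (n + m)))
    (ρ : Finset (Finset (Fin (n + m)))) : ℕ :=
  (Finset.univ.filter fun i : Fin j => Scount n m (B i) ρ ≠ 0).card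

/-- Number of old blocks (indexed by `B`) re-observed with frequency `l`. -/
def RlcntB (n m j l : ℕ) (B : Fin j → Finset (Fin (n + m)))
    (ρ : Finset (Finset (Fin (n + m)))) : ℕ :=
  (Finset.univ.filter fun i : Fin j => Scount n m (B i) ρ = l).card

/-- Number of blocks of the restriction whose containing block has a new element. -/
def Rcnt (n m : ℕ) (ρ : Finset (Finset (Fin (n + m)))) : ℕ :=
  ((restrictPart ρ (oldSet n m)).filter fun Bi =>
    ∃ C ∈ ρ, Bi ⊆ C ∧ (C \ oldSet n m) ≠ ∅).card

/-- Number of blocks of the restriction whose containing block has exactly `l` new elements. -/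
def Rlcnt (n m l : ℕ) (ρ : Finset (Finset (Fin (n + m)))) : ℕ :=
  ((restrictPart ρ (oldSet n m)).filter fun Bi =>
    ∃ C ∈ ρ, Bi ⊆ C ∧ (C \ oldSet n m).card = l).card

/-- Number of bijections from `Fin j` onto the blocks of `π'` satisfying `Q`. -/
def bijCount {α : Type*} [Fintype α] (j : ℕ) (π' : Finset (Finset α))
    (Q : (Fin j → Finset α) → Prop) : ℕ :=
  ((Finset.univ : Finset (Fin j → Finset α)).filter fun β =>
    Function.Injective β ∧ Finset.image β Finset.univ = π' ∧ Q β).card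

/-- Conditional expectation given almost-complete information. -/
def condExpTau (σ : ℝ) (V : ℕ → ℕ → ℝ) (n m j p : ℕ) (τ : Fin p → Fin j) (nτ : Fin p → ℕ)
    (f : Finset (Finset (Fin (n + m))) → ℝ) : ℝ :=
  (∑ ρ ∈ withJ n m j,
      (bijCount j (restrictPart ρ (oldSet n m)) (fun β => ∀ i, (β (τ i)).card = nτ i) : ℝ) *
        f ρ * gibbsW σ (V (n + m)) ρ) /
    (∑ π' ∈ partsJOf (oldSet n m) j,
      (bijCount j π' (fun β => ∀ i, (β (τ i)).card = nτ i) : ℝ) * gibbsW σ (V n) π')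


lemma risingFac_zero (x : ℝ) : risingFac x 0 = 1 := by simp [risingFac]

lemma risingFac_succ (x : ℝ) (N : ℕ) : risingFac x (N + 1) = risingFac x N * (x + N) := by
  simp [risingFac, Finset.prod_range_succ]

lemma risingFac_succ' (x : ℝ) (N : ℕ) : risingFac x (N + 1) = x * risingFac (x + 1) N := by
  unfold risingFac
  rw [Finset.prod_range_succ', mul_comm]
  congr 1
  · norm_num
  · exact Finset.prod_congr rfl fun i _ => by push_cast; ring

lemma risingFac_pos {x : ℝ} (hx : 0 < x) (N : ℕ) : 0 < risingFac x N :=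
  Finset.prod_pos fun i _ => by positivity

lemma risingFac_zero_left (N : ℕ) (hN : 1 ≤ N) : risingFac (0 : ℝ) N = 0 :=
  Finset.prod_eq_zero (Finset.mem_range.2 hN) (by norm_num)

lemma gfc_zero_left (k : ℕ) (σ γ : ℝ) : gfc 0 k σ γ = if k = 0 then 1 else 0 := by
  have h : ((∑ i ∈ Finset.range (k + 1), (-1 : ℤ) ^ i * (k.choose i) : ℤ) : ℝ)
      = ((if k = 0 then 1 else 0 : ℤ) : ℝ) := by
    exact_mod_cast congrArg (fun z : ℤ => (z : ℝ)) Int.alternating_sum_range_choose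
  push_cast at h
  unfold gfc
  rw [Finset.sum_congr rfl (fun i _ => by rw [risingFac_zero, mul_one])]
  rw [h]
  rcases eq_or_ne k 0 with rfl | hk
  · simp
  · simp [hk]

lemma gfc_zero_right (N : ℕ) (σ γ : ℝ) : gfc N 0 σ γ = risingFac (-γ) N := by
  unfold gfc
  rw [show (0 : ℕ) + 1 = 1 from rfl, Finset.sum_range_one]
  norm_num

lemma gfc_succ_zero (N : ℕ) (σ γ : ℝ) : gfc (N + 1) 0 σ γ = ((N : ℝ) - γ) * gfc N 0 σ γ := by
  rw [gfc_zero_right, gfc_zero_right, risingFac_succ]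
  ring

lemma gfc_succ_succ (N k : ℕ) (σ γ : ℝ) :
    gfc (N + 1) (k + 1) σ γ
      = σ * gfc N k σ γ + ((N : ℝ) - ((k : ℝ) + 1) * σ - γ) * gfc N (k + 1) σ γ := by
  have key : ∀ i ∈ Finset.range (k + 2),
      (-1 : ℝ) ^ i * ((k + 1).choose i : ℝ) * risingFac (-(i : ℝ) * σ - γ) (N + 1)
      = ((N : ℝ) - ((k : ℝ) + 1) * σ - γ) *
          ((-1 : ℝ) ^ i * ((k + 1).choose i : ℝ) * risingFac (-(i : ℝ) * σ - γ) N)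
        + (σ * ((k : ℝ) + 1)) *
          ((-1 : ℝ) ^ i * (k.choose i : ℝ) * risingFac (-(i : ℝ) * σ - γ) N) := by
    intro i hi
    have hi' : i ≤ k + 1 := by
      have := Finset.mem_range.1 hi; omega
    have hch : ((k + 1).choose i : ℝ) * (((k : ℝ) + 1) - i) = ((k : ℝ) + 1) * (k.choose i : ℝ) := by
      have h := Nat.choose_mul_succ_eq k i
      have hcast : ((k.choose i : ℝ)) * ((k : ℝ) + 1) = ((k + 1).choose i : ℝ) * (((k + 1 - i : ℕ) : ℝ)) := by
        exact_mod_cast congrArg (fun z : ℕ => (z : ℝ)) h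
      rw [Nat.cast_sub hi'] at hcast
      push_cast at hcast
      linarith [hcast]
    rw [risingFac_succ]
    linear_combination ((-1 : ℝ) ^ i * σ * risingFac (-(i : ℝ) * σ - γ) N) * hch
  have hlast : ∑ i ∈ Finset.range (k + 2),
        (-1 : ℝ) ^ i * (k.choose i : ℝ) * risingFac (-(i : ℝ) * σ - γ) N
      = ∑ i ∈ Finset.range (k + 1),
        (-1 : ℝ) ^ i * (k.choose i : ℝ) * risingFac (-(i : ℝ) * σ - γ) N := by
    rw [Finset.sum_range_succ]
    simp [Nat.choose_succ_self]
  unfold gfc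
  rw [Finset.sum_congr rfl key, Finset.sum_add_distrib, ← Finset.mul_sum, ← Finset.mul_sum, hlast]
  have hf1 : ((k + 1).factorial : ℝ) ≠ 0 := Nat.cast_ne_zero.2 (Nat.factorial_ne_zero _)
  have hf2 : ((k).factorial : ℝ) ≠ 0 := Nat.cast_ne_zero.2 (Nat.factorial_ne_zero _)
  rw [Nat.factorial_succ]
  push_cast
  field_simp
  ring

lemma cgfc_one (s : ℕ) (hs : 1 ≤ s) (σ : ℝ) : cgfc s 1 σ = σ * risingFac (1 - σ) (s - 1) := by
  obtain ⟨t, rfl⟩ : ∃ t, s = t + 1 := ⟨s - 1, by omega⟩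
  unfold cgfc gfc
  rw [Finset.sum_range_succ, Finset.sum_range_one]
  have h0 : (-((0 : ℕ) : ℝ) * σ - 0) = 0 := by push_cast; ring
  have h1 : (-((1 : ℕ) : ℝ) * σ - 0) = -σ := by push_cast; ring
  rw [h0, h1, risingFac_zero_left _ (by omega), risingFac_succ']
  have h2 : -σ + 1 = 1 - σ := by ring
  rw [h2]
  simp [Nat.factorial]

set_option linter.unusedSectionVars false
set_option linter.unusedVariables false
set_option maxHeartbeats 1000000

section PartBasics
variable {α : Type*} [DecidableEq α]

/-- All partitions of `s` (within a fintype). -/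
def partsOn [Fintype α] (s : Finset α) : Finset (Finset (Finset α)) :=
  Finset.univ.filter (IsPartOn s)

lemma mem_partsOn [Fintype α] {s : Finset α} {P : Finset (Finset α)} :
    P ∈ partsOn s ↔ IsPartOn s P := by simp [partsOn]

namespace IsPartOn
variable {s : Finset α} {P : Finset (Finset α)}

lemma bsubset (h : IsPartOn s P) {B} (hB : B ∈ P) : B ⊆ s := h.1 B hB

lemma ne_empty (h : IsPartOn s P) {B} (hB : B ∈ P) : B ≠ ∅ := fun e => h.2.1 (e ▸ hB)

lemma block_nonempty (h : IsPartOn s P) {B} (hB : B ∈ P) : B.Nonempty :=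
  Finset.nonempty_iff_ne_empty.2 (h.ne_empty hB)

lemma eq_of_mem (h : IsPartOn s P) {B C : Finset α} {a : α} (hB : B ∈ P) (hC : C ∈ P)
    (haB : a ∈ B) (haC : a ∈ C) : B = C := by
  obtain ⟨D, _, hD⟩ := h.2.2 a (h.bsubset hB haB)
  rw [hD B ⟨hB, haB⟩, hD C ⟨hC, haC⟩]

lemma sum_card (h : IsPartOn s P) : ∑ B ∈ P, B.card = s.card := by
  have hs : s = P.biUnion id := by
    ext a
    simp only [Finset.mem_biUnion, id]
    constructor
    · intro ha
      obtain ⟨B, hB, _⟩ := h.2.2 a ha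
      exact ⟨B, hB.1, hB.2⟩
    · rintro ⟨B, hB, haB⟩
      exact h.bsubset hB haB
  have hdisj : ∀ B ∈ P, ∀ C ∈ P, B ≠ C → Disjoint (id B) (id C) := by
    intro B hB C hC hne
    exact Finset.disjoint_left.2 fun a haB haC => hne (h.eq_of_mem hB hC haB haC)
  rw [hs, Finset.card_biUnion hdisj]
  simp

lemma card_le (h : IsPartOn s P) : P.card ≤ s.card := by
  calc P.card = ∑ _B ∈ P, 1 := by simp
    _ ≤ ∑ B ∈ P, B.card := Finset.sum_le_sum fun B hB => (h.block_nonempty hB).card_pos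
    _ = s.card := h.sum_card

lemma card_pos (h : IsPartOn s P) (hs : s.Nonempty) : 0 < P.card := by
  obtain ⟨a, ha⟩ := hs
  obtain ⟨B, hB, _⟩ := h.2.2 a ha
  exact Finset.card_pos.2 ⟨B, hB.1⟩

lemma restrict_self (h : IsPartOn s P) : restrictPart P s = P := by
  unfold restrictPart
  have himg : P.image (fun C => C ∩ s) = P := by
    have : P.image (fun C => C ∩ s) = P.image id :=
      Finset.image_congr fun C hC => Finset.inter_eq_left.2 (h.bsubset hC)
    rw [this, Finset.image_id]
  rw [himg, Finset.erase_eq_of_notMem h.2.1]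

end IsPartOn

lemma mem_restrictPart {P : Finset (Finset α)} {s B : Finset α} :
    B ∈ restrictPart P s ↔ B ≠ ∅ ∧ ∃ C ∈ P, C ∩ s = B := by
  simp [restrictPart, and_comm]

lemma restrictPart_isPartOn {u s : Finset α} {P : Finset (Finset α)}
    (h : IsPartOn u P) (hsu : s ⊆ u) : IsPartOn s (restrictPart P s) := by
  refine ⟨?_, ?_, ?_⟩
  · intro B hB
    obtain ⟨-, C, -, rfl⟩ := mem_restrictPart.1 hB
    exact Finset.inter_subset_right
  · intro hB
    exact (mem_restrictPart.1 hB).1 rfl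
  · intro a ha
    obtain ⟨B, ⟨hBP, haB⟩, huniq⟩ := h.2.2 a (hsu ha)
    have hmem : a ∈ B ∩ s := Finset.mem_inter.2 ⟨haB, ha⟩
    refine ⟨B ∩ s, ⟨mem_restrictPart.2 ⟨?_, B, hBP, rfl⟩, hmem⟩, ?_⟩
    · exact Finset.nonempty_iff_ne_empty.1 ⟨a, hmem⟩
    · rintro D ⟨hD, haD⟩
      obtain ⟨-, C, hC, rfl⟩ := mem_restrictPart.1 hD
      have : C = B := huniq C ⟨hC, (Finset.mem_inter.1 haD).1⟩
      rw [this]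

lemma restrictPart_card_le {P : Finset (Finset α)} {s : Finset α} :
    (restrictPart P s).card ≤ P.card :=
  le_trans (Finset.card_erase_le) Finset.card_image_le

end PartBasics
section Master
variable {α : Type*} [DecidableEq α] [Fintype α]

/-- Add element `a` to candidate block `c` (`c = ∅` means a new singleton block). -/
def addTo (a : α) (c : Finset α) (ρ : Finset (Finset α)) : Finset (Finset α) :=
  insert (insert a c) (ρ.erase c)

/-- Remove element `a` from a partition. -/
def delElt (a : α) (ρ : Finset (Finset α)) : Finset (Finset α) :=
  (ρ.image fun C => C.erase a).erase ∅

/-- The block of the partition containing `a`. -/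
def blockOf (ρ : Finset (Finset α)) (a : α) : Finset α :=
  if h : ∃ B, B ∈ ρ ∧ a ∈ B then h.choose else ∅

lemma blockOf_eq {s : Finset α} {ρ : Finset (Finset α)} (h : IsPartOn s ρ)
    {B : Finset α} {a : α} (hB : B ∈ ρ) (haB : a ∈ B) : blockOf ρ a = B := by
  have hex : ∃ B, B ∈ ρ ∧ a ∈ B := ⟨B, hB, haB⟩
  rw [blockOf, dif_pos hex]
  exact h.eq_of_mem hex.choose_spec.1 hB hex.choose_spec.2 haB

variable {s : Finset α} {ρ : Finset (Finset α)} {a : α} {c : Finset α}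

lemma notmem_block (hρ : IsPartOn s ρ) (ha : a ∉ s) {C : Finset α} (hC : C ∈ ρ) :
    a ∉ C := fun haC => ha (hρ.bsubset hC haC)

lemma csubset (hρ : IsPartOn s ρ) (hc : c ∈ insert ∅ ρ) : c ⊆ s := by
  rcases Finset.mem_insert.1 hc with rfl | hc
  · exact Finset.empty_subset s
  · exact hρ.bsubset hc

lemma a_notmem_c (hρ : IsPartOn s ρ) (ha : a ∉ s) (hc : c ∈ insert ∅ ρ) : a ∉ c :=
  fun hac => ha (csubset hρ hc hac)

lemma insert_a_notmem_erase (hρ : IsPartOn s ρ) (ha : a ∉ s) :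
    insert a c ∉ ρ.erase c := fun hmem =>
  notmem_block hρ ha (Finset.mem_of_mem_erase hmem) (Finset.mem_insert_self a c)

lemma addTo_isPartOn (hρ : IsPartOn s ρ) (ha : a ∉ s) (hc : c ∈ insert ∅ ρ) :
    IsPartOn (insert a s) (addTo a c ρ) := by
  unfold addTo
  refine ⟨?_, ?_, ?_⟩
  · intro B hB
    rcases Finset.mem_insert.1 hB with rfl | hB
    · exact Finset.insert_subset_insert a (csubset hρ hc)
    · exact (hρ.bsubset (Finset.mem_of_mem_erase hB)).trans (Finset.subset_insert a s)
  · intro hB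
    rcases Finset.mem_insert.1 hB with hB | hB
    · exact absurd hB.symm (Finset.insert_ne_empty a c)
    · exact hρ.2.1 (Finset.mem_of_mem_erase hB)
  · intro b hb
    rcases Finset.mem_insert.1 hb with rfl | hb
    · refine ⟨insert b c, ⟨Finset.mem_insert_self _ _, Finset.mem_insert_self _ _⟩, ?_⟩
      rintro D ⟨hD, hbD⟩
      rcases Finset.mem_insert.1 hD with rfl | hD
      · rfl
      · exact absurd hbD (notmem_block hρ ha (Finset.mem_of_mem_erase hD))
    · obtain ⟨B, ⟨hBρ, hbB⟩, huniq⟩ := hρ.2.2 b hb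
      have hba : b ≠ a := fun e => ha (e ▸ hb)
      by_cases hBc : B = c
      · refine ⟨insert a c, ⟨Finset.mem_insert_self _ _,
          Finset.mem_insert_of_mem (hBc ▸ hbB)⟩, ?_⟩
        rintro D ⟨hD, hbD⟩
        rcases Finset.mem_insert.1 hD with rfl | hD
        · rfl
        · have hDB : D = B := huniq D ⟨Finset.mem_of_mem_erase hD, hbD⟩
          exact absurd (hDB.trans hBc) (Finset.ne_of_mem_erase hD)
      · refine ⟨B, ⟨Finset.mem_insert_of_mem (Finset.mem_erase.2 ⟨hBc, hBρ⟩), hbB⟩, ?_⟩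
        rintro D ⟨hD, hbD⟩
        rcases Finset.mem_insert.1 hD with rfl | hD
        · rcases Finset.mem_insert.1 hbD with rfl | hbc
          · exact absurd rfl hba
          · have hcρ : c ∈ ρ := by
              rcases Finset.mem_insert.1 hc with rfl | h
              · exact absurd hbc (Finset.notMem_empty b)
              · exact h
            exact absurd (huniq c ⟨hcρ, hbc⟩).symm hBc
        · exact huniq D ⟨Finset.mem_of_mem_erase hD, hbD⟩

lemma addTo_card (hρ : IsPartOn s ρ) (ha : a ∉ s) (hc : c ∈ insert ∅ ρ) :
    (addTo a c ρ).card = if c = ∅ then ρ.card + 1 else ρ.card := by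
  unfold addTo
  rw [Finset.card_insert_of_notMem (insert_a_notmem_erase hρ ha)]
  rcases Finset.mem_insert.1 hc with rfl | hc
  · rw [Finset.erase_eq_of_notMem hρ.2.1, if_pos rfl]
  · rw [if_neg (hρ.ne_empty hc), Finset.card_erase_of_mem hc]
    have hpos : 0 < ρ.card := Finset.card_pos.2 ⟨c, hc⟩
    omega

lemma addTo_prod (hρ : IsPartOn s ρ) (ha : a ∉ s) (hc : c ∈ insert ∅ ρ)
    (f : Finset α → ℝ) :
    ∏ B ∈ addTo a c ρ, f B = f (insert a c) * ∏ B ∈ ρ.erase c, f B := by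
  exact Finset.prod_insert (insert_a_notmem_erase hρ ha)

lemma restrictPart_addTo (hρ : IsPartOn s ρ) (ha : a ∉ s) (hc : c ∈ insert ∅ ρ)
    {t : Finset α} (hat : a ∉ t) :
    restrictPart (addTo a c ρ) t = restrictPart ρ t := by
  unfold restrictPart addTo
  rw [Finset.image_insert]
  have h1 : insert a c ∩ t = c ∩ t := by
    ext x; simp only [Finset.mem_inter, Finset.mem_insert]
    constructor
    · rintro ⟨rfl | hx, hxt⟩
      · exact absurd hxt hat
      · exact ⟨hx, hxt⟩
    · rintro ⟨hx, hxt⟩; exact ⟨Or.inr hx, hxt⟩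
  rw [h1]
  rcases Finset.mem_insert.1 hc with rfl | hc
  · rw [Finset.erase_eq_of_notMem hρ.2.1, Finset.empty_inter,
      Finset.erase_insert_eq_erase]
  · congr 1
    conv_rhs => rw [← Finset.insert_erase hc]
    rw [Finset.image_insert]

lemma mem_addTo_iff (hρ : IsPartOn s ρ) (ha : a ∉ s) (hc : c ∈ insert ∅ ρ)
    {Bi : Finset α} (haBi : a ∉ Bi) :
    Bi ∈ addTo a c ρ ↔ Bi ∈ ρ.erase c := by
  unfold addTo
  rw [Finset.mem_insert]
  constructor
  · rintro (rfl | h)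
    · exact absurd (Finset.mem_insert_self a c) haBi
    · exact h
  · exact Or.inr

lemma delElt_isPartOn {ρ' : Finset (Finset α)} (hρ' : IsPartOn (insert a s) ρ')
    (ha : a ∉ s) : IsPartOn s (delElt a ρ') := by
  unfold delElt
  refine ⟨?_, ?_, ?_⟩
  · intro B hB
    obtain ⟨C, hC, rfl⟩ := Finset.mem_image.1 (Finset.mem_of_mem_erase hB)
    intro x hx
    have hxC := Finset.mem_of_mem_erase hx
    have : x ∈ insert a s := hρ'.bsubset hC hxC
    rcases Finset.mem_insert.1 this with rfl | h
    · exact absurd rfl (Finset.ne_of_mem_erase hx)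
    · exact h
  · exact fun h => (Finset.ne_of_mem_erase h) rfl
  · intro b hb
    have hba : b ≠ a := fun e => ha (e ▸ hb)
    obtain ⟨B, ⟨hBρ, hbB⟩, huniq⟩ := hρ'.2.2 b (Finset.mem_insert_of_mem hb)
    have hbBe : b ∈ B.erase a := Finset.mem_erase.2 ⟨hba, hbB⟩
    refine ⟨B.erase a, ⟨Finset.mem_erase.2 ⟨?_, Finset.mem_image_of_mem _ hBρ⟩, hbBe⟩, ?_⟩
    · exact fun e => by rw [e] at hbBe; simp at hbBe
    · rintro D ⟨hD, hbD⟩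
      obtain ⟨C, hC, rfl⟩ := Finset.mem_image.1 (Finset.mem_of_mem_erase hD)
      rw [huniq C ⟨hC, Finset.mem_of_mem_erase hbD⟩]

lemma delElt_addTo (hρ : IsPartOn s ρ) (ha : a ∉ s) (hc : c ∈ insert ∅ ρ) :
    delElt a (addTo a c ρ) = ρ := by
  unfold delElt addTo
  rw [Finset.image_insert, Finset.erase_insert (a_notmem_c hρ ha hc)]
  have himg : (ρ.erase c).image (fun C => C.erase a) = ρ.erase c := by
    have h1 : (ρ.erase c).image (fun C => C.erase a) = (ρ.erase c).image id :=
      Finset.image_congr fun C hC =>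
        Finset.erase_eq_of_notMem (notmem_block hρ ha (Finset.mem_of_mem_erase hC))
    rw [h1, Finset.image_id]
  rw [himg]
  rcases Finset.mem_insert.1 hc with rfl | hc
  · rw [Finset.erase_eq_of_notMem hρ.2.1, Finset.erase_insert hρ.2.1]
  · rw [Finset.insert_erase hc, Finset.erase_eq_of_notMem hρ.2.1]

lemma blockOf_addTo (hρ : IsPartOn s ρ) (ha : a ∉ s) (hc : c ∈ insert ∅ ρ) :
    blockOf (addTo a c ρ) a = insert a c :=
  blockOf_eq (addTo_isPartOn hρ ha hc) (Finset.mem_insert_self _ _)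
    (Finset.mem_insert_self a c)

lemma blockOf_mem {ρ' : Finset (Finset α)} (hρ' : IsPartOn (insert a s) ρ') :
    blockOf ρ' a ∈ ρ' ∧ a ∈ blockOf ρ' a := by
  obtain ⟨B, ⟨hB, haB⟩, -⟩ := hρ'.2.2 a (Finset.mem_insert_self a s)
  rw [blockOf_eq hρ' hB haB]
  exact ⟨hB, haB⟩

lemma blockOf_erase_mem {ρ' : Finset (Finset α)} (hρ' : IsPartOn (insert a s) ρ')
    (ha : a ∉ s) : (blockOf ρ' a).erase a ∈ insert ∅ (delElt a ρ') := by
  rcases eq_or_ne ((blockOf ρ' a).erase a) ∅ with he | he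
  · rw [he]; exact Finset.mem_insert_self _ _
  · refine Finset.mem_insert_of_mem ?_
    exact Finset.mem_erase.2 ⟨he, Finset.mem_image_of_mem _ (blockOf_mem hρ').1⟩

lemma addTo_delElt {ρ' : Finset (Finset α)} (hρ' : IsPartOn (insert a s) ρ')
    (ha : a ∉ s) : addTo a ((blockOf ρ' a).erase a) (delElt a ρ') = ρ' := by
  obtain ⟨hBmem, haB⟩ := blockOf_mem hρ'
  set B := blockOf ρ' a with hBdef
  have hins : insert a (B.erase a) = B := Finset.insert_erase haB
  unfold addTo
  rw [hins]
  ext X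
  simp only [Finset.mem_insert]
  constructor
  · rintro (rfl | hX)
    · exact hBmem
    · have hXd := Finset.mem_of_mem_erase hX
      obtain ⟨C, hC, rfl⟩ := Finset.mem_image.1 (Finset.mem_of_mem_erase hXd)
      by_cases haC : a ∈ C
      · exact absurd (congrArg (fun t : Finset α => t.erase a)
          (hρ'.eq_of_mem hC hBmem haC haB)) (Finset.ne_of_mem_erase hX)
      · rwa [Finset.erase_eq_of_notMem haC]
  · intro hX
    by_cases hXB : X = B
    · exact Or.inl hXB
    · have haX : a ∉ X := fun haX => hXB (hρ'.eq_of_mem hX hBmem haX haB)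
      refine Or.inr (Finset.mem_erase.2 ⟨?_, Finset.mem_erase.2 ⟨hρ'.ne_empty hX, ?_⟩⟩)
      · intro hXe
        obtain ⟨b, hb⟩ := hρ'.block_nonempty hX
        have hbB : b ∈ B := Finset.mem_of_mem_erase (hXe ▸ hb)
        exact hXB (hρ'.eq_of_mem hX hBmem hb hbB)
      · rw [← Finset.erase_eq_of_notMem haX]
        exact Finset.mem_image_of_mem _ hX
section Sums
variable {α : Type*} [DecidableEq α] [Fintype α]
variable {s : Finset α} {ρ : Finset (Finset α)} {a : α} {c : Finset α} {σ' : ℝ}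

lemma partsJOf_eq_filter (t : Finset α) (j : ℕ) :
    partsJOf t j = (partsOn t).filter (fun π => π.card = j) := by
  unfold partsJOf partsOn
  ext P
  simp [Finset.mem_filter]
lemma sum_partsOn_insert (a : α) (s : Finset α) (ha : a ∉ s) (F : Finset (Finset α) → ℝ) :
    ∑ ρ' ∈ partsOn (insert a s), F ρ' =
      ∑ ρ ∈ partsOn s, ∑ c ∈ insert ∅ ρ, F (addTo a c ρ) := by
  rw [Finset.sum_sigma' (partsOn s) (fun ρ => insert ∅ ρ) (fun ρ c => F (addTo a c ρ))]
  symm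
  apply Finset.sum_nbij' (i := fun p => addTo a p.2 p.1)
    (j := fun ρ' => ⟨delElt a ρ', (blockOf ρ' a).erase a⟩)
  · rintro ⟨ρ, c⟩ hp
    obtain ⟨hρ, hc⟩ := Finset.mem_sigma.1 hp
    exact mem_partsOn.2 (addTo_isPartOn (mem_partsOn.1 hρ) ha hc)
  · intro ρ' hρ'
    have h := mem_partsOn.1 hρ'
    exact Finset.mem_sigma.2 ⟨mem_partsOn.2 (delElt_isPartOn h ha), blockOf_erase_mem h ha⟩
  · rintro ⟨ρ, c⟩ hp
    obtain ⟨hρm, hc⟩ := Finset.mem_sigma.1 hp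
    have hρ := mem_partsOn.1 hρm
    have h1 := delElt_addTo hρ ha hc
    have h2 : (blockOf (addTo a c ρ) a).erase a = c := by
      rw [blockOf_addTo hρ ha hc, Finset.erase_insert (a_notmem_c hρ ha hc)]
    exact Sigma.ext h1 (heq_of_eq (by rw [h2]))
  · intro ρ' hρ'
    exact addTo_delElt (mem_partsOn.1 hρ') ha
  · rintro ⟨ρ, c⟩ _
    rfl

lemma prod_r_addTo_empty (σ : ℝ) (hρ : IsPartOn s ρ) (ha : a ∉ s) :
    ∏ B ∈ addTo a ∅ ρ, risingFac (1 - σ) (B.card - 1)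
      = ∏ B ∈ ρ, risingFac (1 - σ) (B.card - 1) := by
  rw [addTo_prod hρ ha (Finset.mem_insert_self _ _), Finset.erase_eq_of_notMem hρ.2.1]
  simp [risingFac_zero]

lemma prod_r_addTo_mem (σ : ℝ) (hρ : IsPartOn s ρ) (ha : a ∉ s) (hc : c ∈ ρ) :
    ∏ B ∈ addTo a c ρ, risingFac (1 - σ) (B.card - 1)
      = ((c.card : ℝ) - σ) * ∏ B ∈ ρ, risingFac (1 - σ) (B.card - 1) := by
  rw [addTo_prod hρ ha (Finset.mem_insert_of_mem hc)]
  have hcard : (insert a c).card = c.card + 1 :=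
    Finset.card_insert_of_notMem (a_notmem_c hρ ha (Finset.mem_insert_of_mem hc))
  have hc1 : 1 ≤ c.card := (hρ.block_nonempty hc).card_pos
  have hr : risingFac (1 - σ) ((insert a c).card - 1)
      = ((c.card : ℝ) - σ) * risingFac (1 - σ) (c.card - 1) := by
    rw [hcard]
    have h2 : c.card + 1 - 1 = (c.card - 1) + 1 := by omega
    rw [h2, risingFac_succ]
    have hcast : ((c.card - 1 : ℕ) : ℝ) = (c.card : ℝ) - 1 := by
      rw [Nat.cast_sub hc1]; norm_num
    rw [hcast]; ring
  rw [hr, ← Finset.mul_prod_erase ρ _ hc]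
  ring

lemma sum_sub_sigma (hρ : IsPartOn s ρ) :
    ∑ c ∈ ρ, ((c.card : ℝ) - σ') = (s.card : ℝ) - (ρ.card : ℝ) * σ' := by
  rw [Finset.sum_sub_distrib]
  simp only [Finset.sum_const, nsmul_eq_mul]
  congr 1
  exact_mod_cast congrArg (fun z : ℕ => (z : ℝ)) hρ.sum_card

/-- The number of `j`-block partitions weighted by the EPPF product kernel. -/
lemma sum_partsJOf_prod (σ : ℝ) (hσ0 : σ ≠ 0) (s : Finset α) :
    ∀ j : ℕ, ∑ π ∈ partsJOf s j, ∏ B ∈ π, risingFac (1 - σ) (B.card - 1)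
      = cgfc s.card j σ / σ ^ j := by
  induction s using Finset.induction_on with
  | empty =>
    intro j
    have hset : partsJOf (∅ : Finset α) j
        = if j = 0 then {(∅ : Finset (Finset α))} else ∅ := by
      ext P
      simp only [partsJOf, Finset.mem_filter, Finset.mem_univ, true_and]
      have hP : ∀ Q : Finset (Finset α), IsPartOn ∅ Q → Q = ∅ := by
        intro Q hQ
        ext B
        simp only [Finset.notMem_empty, iff_false]
        intro hB
        exact hQ.2.1 (by rwa [Finset.subset_empty.1 (hQ.bsubset hB)] at hB)
      split_ifs with hj
      · subst hj
        simp only [Finset.mem_singleton]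
        constructor
        · rintro ⟨h1, _⟩; exact hP P h1
        · rintro rfl
          exact ⟨⟨fun B hB => absurd hB (Finset.notMem_empty B), Finset.notMem_empty ∅,
            fun x hx => absurd hx (Finset.notMem_empty x)⟩, rfl⟩
      · simp only [Finset.notMem_empty, iff_false]
        rintro ⟨h1, h2⟩
        rw [hP P h1] at h2
        exact hj (by simpa using h2.symm)
    rw [hset, Finset.card_empty]
    unfold cgfc
    rw [gfc_zero_left]
    split_ifs with hj
    · subst hj; simp
    · simp
  | @insert a s ha ih =>
    intro j
    rcases j with _ | j
    · -- j = 0 : no partitions of a nonempty set with zero blocks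
      have hset : partsJOf (insert a s) 0 = ∅ := by
        ext P
        simp only [partsJOf, Finset.mem_filter, Finset.mem_univ, true_and,
          Finset.notMem_empty, iff_false]
        rintro ⟨h1, h2⟩
        have := h1.card_pos ⟨a, Finset.mem_insert_self a s⟩
        omega
      rw [hset, Finset.sum_empty]
      unfold cgfc
      rw [gfc_zero_right, show (-(0:ℝ)) = 0 by norm_num,
        risingFac_zero_left _ (by rw [Finset.card_insert_of_notMem ha]; omega)]
      simp
    · rw [partsJOf_eq_filter, Finset.sum_filter, sum_partsOn_insert a s ha]
      have hper : ∀ ρ ∈ partsOn s,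
          (∑ c ∈ insert ∅ ρ, if (addTo a c ρ).card = j + 1 then
              ∏ B ∈ addTo a c ρ, risingFac (1 - σ) (B.card - 1) else 0)
          = (if ρ.card = j then ∏ B ∈ ρ, risingFac (1 - σ) (B.card - 1) else 0)
            + (if ρ.card = j + 1 then
                ((s.card : ℝ) - ((j : ℝ) + 1) * σ) * ∏ B ∈ ρ, risingFac (1 - σ) (B.card - 1)
              else 0) := by
        intro ρ hρm
        have hρ := mem_partsOn.1 hρm
        rw [Finset.sum_insert hρ.2.1]
        congr 1
        · rw [addTo_card hρ ha (Finset.mem_insert_self _ _), if_pos rfl,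
            prod_r_addTo_empty σ hρ ha]
          have hiff : (ρ.card + 1 = j + 1) ↔ (ρ.card = j) := by omega
          simp only [hiff]
        · by_cases hcard : ρ.card = j + 1
          · rw [if_pos hcard]
            have hterm : ∀ c ∈ ρ,
                (if (addTo a c ρ).card = j + 1 then
                  ∏ B ∈ addTo a c ρ, risingFac (1 - σ) (B.card - 1) else 0)
                = ((c.card : ℝ) - σ) * ∏ B ∈ ρ, risingFac (1 - σ) (B.card - 1) := by
              intro c hc
              rw [addTo_card hρ ha (Finset.mem_insert_of_mem hc),
                if_neg (hρ.ne_empty hc), if_pos hcard, prod_r_addTo_mem σ hρ ha hc]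
            rw [Finset.sum_congr rfl hterm, ← Finset.sum_mul, sum_sub_sigma hρ, hcard]
            push_cast
            ring
          · have hterm : ∀ c ∈ ρ,
                (if (addTo a c ρ).card = j + 1 then
                  ∏ B ∈ addTo a c ρ, risingFac (1 - σ) (B.card - 1) else 0) = 0 := by
              intro c hc
              rw [addTo_card hρ ha (Finset.mem_insert_of_mem hc),
                if_neg (hρ.ne_empty hc), if_neg hcard]
            rw [Finset.sum_congr rfl hterm, Finset.sum_const, if_neg hcard, smul_zero]
      rw [Finset.sum_congr rfl hper, Finset.sum_add_distrib]
      have e1 : ∑ ρ ∈ partsOn s, (if ρ.card = j then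
          ∏ B ∈ ρ, risingFac (1 - σ) (B.card - 1) else 0) = cgfc s.card j σ / σ ^ j := by
        rw [← Finset.sum_filter, ← partsJOf_eq_filter]
        exact ih j
      have e2 : ∑ ρ ∈ partsOn s, (if ρ.card = j + 1 then
          ((s.card : ℝ) - ((j : ℝ) + 1) * σ) * ∏ B ∈ ρ, risingFac (1 - σ) (B.card - 1) else 0)
          = ((s.card : ℝ) - ((j : ℝ) + 1) * σ) * (cgfc s.card (j + 1) σ / σ ^ (j + 1)) := by
        rw [← Finset.sum_filter, ← Finset.mul_sum, ← partsJOf_eq_filter, ih (j + 1)]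
      rw [e1, e2, Finset.card_insert_of_notMem ha]
      unfold cgfc
      rw [gfc_succ_succ]
      have hσk : σ ^ j ≠ 0 := pow_ne_zero _ hσ0
      have hσk1 : σ ^ (j + 1) ≠ 0 := pow_ne_zero _ hσ0
      field_simp
      ring
/-- Kolmogorov consistency of the Gibbs weights: summing over all extensions. -/
lemma sum_ext_weight (σ : ℝ) (V : ℕ → ℕ → ℝ)
    (hVrec : ∀ N k, 1 ≤ k → k ≤ N →
      V N k = V (N + 1) (k + 1) + ((N : ℝ) - (k : ℝ) * σ) * V (N + 1) k)
    (old : Finset α) (hne : old.Nonempty) (π' : Finset (Finset α)) (hπ : IsPartOn old π')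
    (T : Finset α) (hdisj : Disjoint T old) :
    ∑ ρ ∈ (partsOn (old ∪ T)).filter (fun ρ => restrictPart ρ old = π'),
        V (old.card + T.card) ρ.card * ∏ C ∈ ρ, risingFac (1 - σ) (C.card - 1)
      = V old.card π'.card * ∏ C ∈ π', risingFac (1 - σ) (C.card - 1) := by
  induction T using Finset.induction_on with
  | empty =>
    have hset : (partsOn (old ∪ ∅)).filter (fun ρ => restrictPart ρ old = π') = {π'} := by
      rw [Finset.union_empty]
      ext ρ
      simp only [Finset.mem_filter, Finset.mem_singleton, mem_partsOn]
      constructor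
      · rintro ⟨h1, h2⟩
        rw [← h2, h1.restrict_self]
      · rintro rfl
        exact ⟨hπ, hπ.restrict_self⟩
    rw [hset, Finset.sum_singleton, Finset.card_empty]
    norm_num
  | @insert a T haT ih =>
    have haold : a ∉ old := Finset.disjoint_left.1 hdisj (Finset.mem_insert_self a T)
    have hTold : Disjoint T old :=
      Finset.disjoint_of_subset_left (Finset.subset_insert a T) hdisj
    have hanotin : a ∉ old ∪ T := by
      simp only [Finset.mem_union, not_or]
      exact ⟨haold, haT⟩
    have hNcard : (old ∪ T).card = old.card + T.card :=
      Finset.card_union_of_disjoint hTold.symm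
    set N := old.card + T.card with hN
    have hcardins : old.card + (insert a T).card = N + 1 := by
      rw [Finset.card_insert_of_notMem haT]; omega
    rw [Finset.union_insert, Finset.sum_filter, hcardins,
      sum_partsOn_insert a (old ∪ T) hanotin]
    have hper : ∀ ρ ∈ partsOn (old ∪ T),
        (∑ c ∈ insert ∅ ρ, if restrictPart (addTo a c ρ) old = π' then
            V (N + 1) (addTo a c ρ).card * ∏ B ∈ addTo a c ρ, risingFac (1 - σ) (B.card - 1)
          else 0)
        = (if restrictPart ρ old = π' then
            V N ρ.card * ∏ B ∈ ρ, risingFac (1 - σ) (B.card - 1) else 0) := by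
      intro ρ hρm
      have hρ := mem_partsOn.1 hρm
      rw [Finset.sum_insert hρ.2.1]
      by_cases hres : restrictPart ρ old = π'
      · have hres0 : restrictPart (addTo a ∅ ρ) old = π' := by
          rw [restrictPart_addTo hρ hanotin (Finset.mem_insert_self _ _) haold, hres]
        rw [if_pos hres0, if_pos hres,
          addTo_card hρ hanotin (Finset.mem_insert_self _ _), if_pos rfl,
          prod_r_addTo_empty σ hρ hanotin]
        have hterm : ∀ c ∈ ρ,
            (if restrictPart (addTo a c ρ) old = π' then
              V (N + 1) (addTo a c ρ).card * ∏ B ∈ addTo a c ρ, risingFac (1 - σ) (B.card - 1)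
            else 0)
            = ((c.card : ℝ) - σ) * (V (N + 1) ρ.card * ∏ B ∈ ρ, risingFac (1 - σ) (B.card - 1)) := by
          intro c hc
          rw [restrictPart_addTo hρ hanotin (Finset.mem_insert_of_mem hc) haold,
            if_pos hres, addTo_card hρ hanotin (Finset.mem_insert_of_mem hc),
            if_neg (hρ.ne_empty hc), prod_r_addTo_mem σ hρ hanotin hc]
          ring
        rw [Finset.sum_congr rfl hterm, ← Finset.sum_mul, sum_sub_sigma hρ, hNcard]
        have hk1 : 1 ≤ ρ.card := hρ.card_pos (hne.mono Finset.subset_union_left)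
        have hkN : ρ.card ≤ N := by rw [← hNcard]; exact hρ.card_le
        rw [hVrec N ρ.card hk1 hkN]
        push_cast [hN]
        ring
      · have hres0 : ∀ c ∈ insert ∅ ρ, restrictPart (addTo a c ρ) old ≠ π' := by
          intro c hc
          rw [restrictPart_addTo hρ hanotin hc haold]
          exact hres
        rw [if_neg hres, if_neg (hres0 ∅ (Finset.mem_insert_self _ _))]
        have : ∀ c ∈ ρ, (if restrictPart (addTo a c ρ) old = π' then
            V (N + 1) (addTo a c ρ).card * ∏ B ∈ addTo a c ρ, risingFac (1 - σ) (B.card - 1)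
          else 0) = 0 := fun c hc => if_neg (hres0 c (Finset.mem_insert_of_mem hc))
        rw [Finset.sum_congr rfl this, Finset.sum_const, smul_zero, add_zero]
    rw [Finset.sum_congr rfl hper, ← Finset.sum_filter]
    exact ih hTold

/-- Extensions that never touch the old block `Bi`, refined by block count. -/
lemma sum_ext_untouched (σ : ℝ) (hσ0 : σ ≠ 0)
    (old : Finset α) (π' : Finset (Finset α)) (hπ : IsPartOn old π')
    (Bi : Finset α) (hBi : Bi ∈ π')
    (T : Finset α) (hdisj : Disjoint T old) (k : ℕ) :
    ∑ ρ ∈ (partsOn (old ∪ T)).filter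
        (fun ρ => restrictPart ρ old = π' ∧ Bi ∈ ρ ∧ ρ.card = π'.card + k),
        ∏ C ∈ ρ, risingFac (1 - σ) (C.card - 1)
      = (∏ C ∈ π', risingFac (1 - σ) (C.card - 1)) *
          gfc T.card k σ (-(old.card : ℝ) + (Bi.card : ℝ) + ((π'.card : ℝ) - 1) * σ) / σ ^ k := by
  induction T using Finset.induction_on generalizing k with
  | empty =>
    have hset : (partsOn (old ∪ ∅)).filter
        (fun ρ => restrictPart ρ old = π' ∧ Bi ∈ ρ ∧ ρ.card = π'.card + k)
        = if k = 0 then {π'} else ∅ := by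
      rw [Finset.union_empty]
      ext ρ
      simp only [Finset.mem_filter, mem_partsOn]
      split_ifs with hk
      · subst hk
        simp only [Finset.mem_singleton]
        constructor
        · rintro ⟨h1, h2, -, -⟩
          rw [← h2, h1.restrict_self]
        · rintro rfl
          exact ⟨hπ, hπ.restrict_self, hBi, by omega⟩
      · simp only [Finset.notMem_empty, iff_false]
        rintro ⟨h1, h2, -, h4⟩
        rw [← h2, h1.restrict_self] at h4
        omega
    rw [hset, Finset.card_empty, gfc_zero_left]
    split_ifs with hk
    · subst hk
      rw [Finset.sum_singleton]
      simp
    · simp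
  | @insert a T haT ih =>
    have haold : a ∉ old := Finset.disjoint_left.1 hdisj (Finset.mem_insert_self a T)
    have hTold : Disjoint T old :=
      Finset.disjoint_of_subset_left (Finset.subset_insert a T) hdisj
    have hanotin : a ∉ old ∪ T := by
      simp only [Finset.mem_union, not_or]
      exact ⟨haold, haT⟩
    have hNcard : (old ∪ T).card = old.card + T.card :=
      Finset.card_union_of_disjoint hTold.symm
    have haBi : a ∉ Bi := fun h => haold (hπ.bsubset hBi h)
    set γ : ℝ := -(old.card : ℝ) + (Bi.card : ℝ) + ((π'.card : ℝ) - 1) * σ with hγ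
    rw [Finset.union_insert, Finset.sum_filter, sum_partsOn_insert a (old ∪ T) hanotin]
    -- coefficient appearing in the recursion
    have key : ∀ ρ ∈ partsOn (old ∪ T),
        (∑ c ∈ insert ∅ ρ, if restrictPart (addTo a c ρ) old = π' ∧ Bi ∈ addTo a c ρ ∧
              (addTo a c ρ).card = π'.card + k then
            ∏ B ∈ addTo a c ρ, risingFac (1 - σ) (B.card - 1) else 0)
        = (if restrictPart ρ old = π' ∧ Bi ∈ ρ ∧ ρ.card + 1 = π'.card + k then
            ∏ B ∈ ρ, risingFac (1 - σ) (B.card - 1) else 0)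
          + (if restrictPart ρ old = π' ∧ Bi ∈ ρ ∧ ρ.card = π'.card + k then
              ((T.card : ℝ) - (k : ℝ) * σ - γ) * ∏ B ∈ ρ, risingFac (1 - σ) (B.card - 1)
            else 0) := by
      intro ρ hρm
      have hρ := mem_partsOn.1 hρm
      rw [Finset.sum_insert hρ.2.1]
      congr 1
      · -- new singleton block
        rw [restrictPart_addTo hρ hanotin (Finset.mem_insert_self _ _) haold,
          addTo_card hρ hanotin (Finset.mem_insert_self _ _), if_pos rfl]
        have hmem : (Bi ∈ addTo a ∅ ρ) = (Bi ∈ ρ) := by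
          rw [mem_addTo_iff hρ hanotin (Finset.mem_insert_self _ _) haBi,
            Finset.erase_eq_of_notMem hρ.2.1]
        simp only [hmem]
        by_cases hcond : restrictPart ρ old = π' ∧ Bi ∈ ρ ∧ ρ.card + 1 = π'.card + k
        · rw [if_pos hcond, if_pos hcond, prod_r_addTo_empty σ hρ hanotin]
        · rw [if_neg hcond, if_neg hcond]
      · -- join an existing block
        by_cases hcond : restrictPart ρ old = π' ∧ Bi ∈ ρ ∧ ρ.card = π'.card + k
        · obtain ⟨hres, hBiρ, hcard⟩ := hcond
          have hterm : ∀ c ∈ ρ,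
              (if restrictPart (addTo a c ρ) old = π' ∧ Bi ∈ addTo a c ρ ∧
                  (addTo a c ρ).card = π'.card + k then
                ∏ B ∈ addTo a c ρ, risingFac (1 - σ) (B.card - 1) else 0)
              = if c = Bi then 0 else
                  ((c.card : ℝ) - σ) * ∏ B ∈ ρ, risingFac (1 - σ) (B.card - 1) := by
            intro c hc
            rw [restrictPart_addTo hρ hanotin (Finset.mem_insert_of_mem hc) haold,
              addTo_card hρ hanotin (Finset.mem_insert_of_mem hc), if_neg (hρ.ne_empty hc)]
            have hmem : (Bi ∈ addTo a c ρ) = (Bi ∈ ρ.erase c) := by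
              rw [mem_addTo_iff hρ hanotin (Finset.mem_insert_of_mem hc) haBi]
            simp only [hmem]
            by_cases hcBi : c = Bi
            · subst hcBi
              rw [if_pos rfl, if_neg]
              rintro ⟨-, hmem2, -⟩
              exact (Finset.notMem_erase c ρ) hmem2
            · rw [if_neg hcBi, if_pos ⟨hres, Finset.mem_erase.2 ⟨fun e => hcBi e.symm, hBiρ⟩, hcard⟩,
                prod_r_addTo_mem σ hρ hanotin hc]
          rw [Finset.sum_congr rfl hterm, ← Finset.add_sum_erase _ _ hBiρ, if_pos rfl, zero_add,
            Finset.sum_congr rfl (fun c hc => if_neg (Finset.ne_of_mem_erase hc)),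
            ← Finset.sum_mul, Finset.sum_erase_eq_sub hBiρ, sum_sub_sigma hρ, hNcard,
            if_pos ⟨hres, hBiρ, hcard⟩, hcard, hγ]
          have h1B : 1 ≤ Bi.card := (hπ.block_nonempty hBi).card_pos
          push_cast
          ring
        · have hterm : ∀ c ∈ ρ,
              (if restrictPart (addTo a c ρ) old = π' ∧ Bi ∈ addTo a c ρ ∧
                  (addTo a c ρ).card = π'.card + k then
                ∏ B ∈ addTo a c ρ, risingFac (1 - σ) (B.card - 1) else 0) = 0 := by
            intro c hc
            rw [restrictPart_addTo hρ hanotin (Finset.mem_insert_of_mem hc) haold,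
              addTo_card hρ hanotin (Finset.mem_insert_of_mem hc), if_neg (hρ.ne_empty hc)]
            have hmem : (Bi ∈ addTo a c ρ) = (Bi ∈ ρ.erase c) := by
              rw [mem_addTo_iff hρ hanotin (Finset.mem_insert_of_mem hc) haBi]
            simp only [hmem]
            rw [if_neg]
            rintro ⟨h1, h2, h3⟩
            exact hcond ⟨h1, Finset.mem_of_mem_erase h2, h3⟩
          rw [Finset.sum_congr rfl hterm, Finset.sum_const, smul_zero, if_neg hcond]
    rw [Finset.sum_congr rfl key, Finset.sum_add_distrib,
      Finset.card_insert_of_notMem haT]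
    set C0 : ℝ := (T.card : ℝ) - (k : ℝ) * σ - γ with hC0
    have h2 : ∑ ρ ∈ partsOn (old ∪ T),
        (if restrictPart ρ old = π' ∧ Bi ∈ ρ ∧ ρ.card = π'.card + k then
          C0 * ∏ B ∈ ρ, risingFac (1 - σ) (B.card - 1) else 0)
        = C0 * ((∏ C ∈ π', risingFac (1 - σ) (C.card - 1)) * gfc T.card k σ γ / σ ^ k) := by
      have hp : ∀ ρ ∈ partsOn (old ∪ T),
          (if restrictPart ρ old = π' ∧ Bi ∈ ρ ∧ ρ.card = π'.card + k then
            C0 * ∏ B ∈ ρ, risingFac (1 - σ) (B.card - 1) else 0)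
          = C0 * (if restrictPart ρ old = π' ∧ Bi ∈ ρ ∧ ρ.card = π'.card + k then
              ∏ B ∈ ρ, risingFac (1 - σ) (B.card - 1) else 0) := by
        intro ρ _
        rw [mul_ite, mul_zero]
      rw [Finset.sum_congr rfl hp, ← Finset.mul_sum, ← Finset.sum_filter, ih hTold k]
    rw [h2]
    rcases k with _ | k'
    · have hzero : ∀ ρ ∈ partsOn (old ∪ T),
          (if restrictPart ρ old = π' ∧ Bi ∈ ρ ∧ ρ.card + 1 = π'.card + 0 then
            ∏ B ∈ ρ, risingFac (1 - σ) (B.card - 1) else 0) = 0 := by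
        intro ρ hρm
        rw [if_neg]
        rintro ⟨h1, -, h3⟩
        have hle := restrictPart_card_le (P := ρ) (s := old)
        rw [h1] at hle
        omega
      rw [Finset.sum_congr rfl hzero, Finset.sum_const, smul_zero, zero_add,
        gfc_succ_zero]
      simp only [pow_zero, Nat.cast_zero, hC0]
      ring
    · have hshift : ∀ ρ ∈ partsOn (old ∪ T),
          (if restrictPart ρ old = π' ∧ Bi ∈ ρ ∧ ρ.card + 1 = π'.card + (k' + 1) then
            ∏ B ∈ ρ, risingFac (1 - σ) (B.card - 1) else 0)
          = (if restrictPart ρ old = π' ∧ Bi ∈ ρ ∧ ρ.card = π'.card + k' then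
            ∏ B ∈ ρ, risingFac (1 - σ) (B.card - 1) else 0) := by
        intro ρ _
        exact if_congr (by constructor <;> (rintro ⟨u, v, w⟩; exact ⟨u, v, by omega⟩)) rfl rfl
      rw [Finset.sum_congr rfl hshift, ← Finset.sum_filter, ih hTold k', gfc_succ_succ]
      have hσk : σ ^ k' ≠ 0 := pow_ne_zero _ hσ0
      have hσk1 : σ ^ (k' + 1) ≠ 0 := pow_ne_zero _ hσ0
      simp only [hC0]
      push_cast
      field_simp
      ring
lemma mem_partsJOf {t : Finset α} {j : ℕ} {π : Finset (Finset α)} :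
    π ∈ partsJOf t j ↔ IsPartOn t π ∧ π.card = j := by simp [partsJOf]

lemma erase_isPartOn {P : Finset (Finset α)} (h : IsPartOn s P)
    {B : Finset α} (hB : B ∈ P) : IsPartOn (s \ B) (P.erase B) := by
  refine ⟨?_, fun he => h.2.1 (Finset.mem_of_mem_erase he), ?_⟩
  · intro C hC
    have hCP := Finset.mem_of_mem_erase hC
    intro x hx
    refine Finset.mem_sdiff.2 ⟨h.bsubset hCP hx, fun hxB => ?_⟩
    exact (Finset.ne_of_mem_erase hC) (h.eq_of_mem hCP hB hx hxB)
  · intro b hb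
    obtain ⟨hbs, hbB⟩ := Finset.mem_sdiff.1 hb
    obtain ⟨C, ⟨hC, hbC⟩, huniq⟩ := h.2.2 b hbs
    have hCB : C ≠ B := fun e => hbB (e ▸ hbC)
    refine ⟨C, ⟨Finset.mem_erase.2 ⟨hCB, hC⟩, hbC⟩, ?_⟩
    rintro D ⟨hD, hbD⟩
    exact huniq D ⟨Finset.mem_of_mem_erase hD, hbD⟩

lemma insertBlock_isPartOn {A : Finset α} {P : Finset (Finset α)}
    (h : IsPartOn (s \ A) P) (hA : A ⊆ s) (hAne : A.Nonempty) : IsPartOn s (insert A P) := by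
  refine ⟨?_, ?_, ?_⟩
  · intro B hB
    rcases Finset.mem_insert.1 hB with rfl | hB
    · exact hA
    · exact (h.bsubset hB).trans Finset.sdiff_subset
  · intro hB
    rcases Finset.mem_insert.1 hB with hB | hB
    · exact hAne.ne_empty hB.symm
    · exact h.2.1 hB
  · intro b hb
    by_cases hbA : b ∈ A
    · refine ⟨A, ⟨Finset.mem_insert_self _ _, hbA⟩, ?_⟩
      rintro D ⟨hD, hbD⟩
      rcases Finset.mem_insert.1 hD with rfl | hD
      · rfl
      · exact absurd hbA (Finset.mem_sdiff.1 (h.bsubset hD hbD)).2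
    · obtain ⟨C, ⟨hC, hbC⟩, huniq⟩ := h.2.2 b (Finset.mem_sdiff.2 ⟨hb, hbA⟩)
      refine ⟨C, ⟨Finset.mem_insert_of_mem hC, hbC⟩, ?_⟩
      rintro D ⟨hD, hbD⟩
      rcases Finset.mem_insert.1 hD with rfl | hD
      · exact absurd hbD hbA
      · exact huniq D ⟨hD, hbD⟩

lemma notmem_insertBlock {A : Finset α} {P : Finset (Finset α)}
    (h : IsPartOn (s \ A) P) (hAne : A.Nonempty) : A ∉ P := fun hAP => by
  obtain ⟨x, hx⟩ := hAne
  exact (Finset.mem_sdiff.1 (h.bsubset hAP hx)).2 hx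

/-- Sum over partitions with a marked block of prescribed size. -/
lemma sum_marked (σ : ℝ) (hσ0 : σ ≠ 0) (old : Finset α) (j s0 : ℕ) (hj : 1 ≤ j) (hs0 : 1 ≤ s0) :
    ∑ π' ∈ partsJOf old j, ∑ _Bi ∈ π'.filter (fun B => B.card = s0),
        ∏ C ∈ π', risingFac (1 - σ) (C.card - 1)
      = (old.card.choose s0 : ℝ) * risingFac (1 - σ) (s0 - 1) *
          (cgfc (old.card - s0) (j - 1) σ / σ ^ (j - 1)) := by
  rw [Finset.sum_sigma' (partsJOf old j) (fun π' => π'.filter (fun B => B.card = s0))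
    (fun π' _ => ∏ C ∈ π', risingFac (1 - σ) (C.card - 1))]
  have step1 : ∑ p ∈ (partsJOf old j).sigma (fun π' => π'.filter (fun B => B.card = s0)),
      ∏ C ∈ p.1, risingFac (1 - σ) (C.card - 1)
      = ∑ q ∈ (Finset.powersetCard s0 old).sigma (fun A => partsJOf (old \ A) (j - 1)),
          risingFac (1 - σ) (s0 - 1) * ∏ C ∈ q.2, risingFac (1 - σ) (C.card - 1) := by
    apply Finset.sum_nbij' (i := fun p => ⟨p.2, p.1.erase p.2⟩)
      (j := fun q => ⟨insert q.1 q.2, q.1⟩)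
    · rintro ⟨π', Bi⟩ hp
      obtain ⟨hπm, hBim⟩ := Finset.mem_sigma.1 hp
      dsimp only at hπm hBim ⊢
      obtain ⟨hπ, hcard⟩ := mem_partsJOf.1 hπm
      obtain ⟨hBiπ, hBicard⟩ := Finset.mem_filter.1 hBim
      refine Finset.mem_sigma.2 ⟨Finset.mem_powersetCard.2 ⟨hπ.bsubset hBiπ, hBicard⟩, ?_⟩
      exact mem_partsJOf.2 ⟨erase_isPartOn hπ hBiπ,
        by rw [Finset.card_erase_of_mem hBiπ, hcard]⟩
    · rintro ⟨A, π''⟩ hq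
      obtain ⟨hAm, hπm⟩ := Finset.mem_sigma.1 hq
      dsimp only at hAm hπm ⊢
      obtain ⟨hAsub, hAcard⟩ := Finset.mem_powersetCard.1 hAm
      obtain ⟨hπ'', hcard''⟩ := mem_partsJOf.1 hπm
      have hAne : A.Nonempty := Finset.card_pos.1 (by omega)
      refine Finset.mem_sigma.2 ⟨mem_partsJOf.2 ⟨insertBlock_isPartOn hπ'' hAsub hAne, ?_⟩, ?_⟩
      · rw [Finset.card_insert_of_notMem (notmem_insertBlock hπ'' hAne), hcard'']
        omega
      · exact Finset.mem_filter.2 ⟨Finset.mem_insert_self _ _, hAcard⟩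
    · rintro ⟨π', Bi⟩ hp
      obtain ⟨hπm, hBim⟩ := Finset.mem_sigma.1 hp
      dsimp only at hπm hBim ⊢
      obtain ⟨hBiπ, -⟩ := Finset.mem_filter.1 hBim
      exact Sigma.ext (Finset.insert_erase hBiπ) (heq_of_eq rfl)
    · rintro ⟨A, π''⟩ hq
      obtain ⟨hAm, hπm⟩ := Finset.mem_sigma.1 hq
      dsimp only at hAm hπm ⊢
      obtain ⟨hAsub, hAcard⟩ := Finset.mem_powersetCard.1 hAm
      obtain ⟨hπ'', -⟩ := mem_partsJOf.1 hπm
      have hAne : A.Nonempty := Finset.card_pos.1 (by omega)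
      exact Sigma.ext rfl (heq_of_eq (Finset.erase_insert (notmem_insertBlock hπ'' hAne)))
    · rintro ⟨π', Bi⟩ hp
      obtain ⟨hπm, hBim⟩ := Finset.mem_sigma.1 hp
      dsimp only at hπm hBim ⊢
      obtain ⟨hBiπ, hBicard⟩ := Finset.mem_filter.1 hBim
      rw [← Finset.mul_prod_erase _ _ hBiπ, hBicard]
  rw [step1, Finset.sum_sigma]
  have hinner : ∀ A ∈ Finset.powersetCard s0 old,
      (∑ π'' ∈ partsJOf (old \ A) (j - 1),
        risingFac (1 - σ) (s0 - 1) * ∏ C ∈ π'', risingFac (1 - σ) (C.card - 1))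
      = risingFac (1 - σ) (s0 - 1) * (cgfc (old.card - s0) (j - 1) σ / σ ^ (j - 1)) := by
    intro A hA
    obtain ⟨hAsub, hAcard⟩ := Finset.mem_powersetCard.1 hA
    rw [← Finset.mul_sum, sum_partsJOf_prod σ hσ0 (old \ A) (j - 1),
      Finset.card_sdiff_of_subset hAsub, hAcard]
  rw [Finset.sum_congr rfl hinner, Finset.sum_const, Finset.card_powersetCard, nsmul_eq_mul]
  ring

lemma partsJOf_nonempty : ∀ (j : ℕ) (s : Finset α), 1 ≤ j → j ≤ s.card →
    (partsJOf s j).Nonempty := by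
  intro j
  induction j with
  | zero => intro s h; omega
  | succ j ihj =>
    intro s _ hcard
    rcases Nat.eq_zero_or_pos j with rfl | hj
    · refine ⟨{s}, mem_partsJOf.2 ⟨⟨?_, ?_, ?_⟩, Finset.card_singleton s⟩⟩
      · intro B hB
        rw [Finset.mem_singleton.1 hB]
      · intro h
        have hsne : s.Nonempty := Finset.card_pos.1 (by omega)
        exact hsne.ne_empty (Finset.mem_singleton.1 h).symm
      · intro b hb
        exact ⟨s, ⟨Finset.mem_singleton_self s, hb⟩, fun D hD => Finset.mem_singleton.1 hD.1⟩
    · have hsne : s.Nonempty := Finset.card_pos.1 (by omega)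
      obtain ⟨a, ha⟩ := hsne
      obtain ⟨π, hπ⟩ := ihj (s.erase a) hj (by rw [Finset.card_erase_of_mem ha]; omega)
      obtain ⟨hπp, hπcard⟩ := mem_partsJOf.1 hπ
      rw [Finset.erase_eq] at hπp
      refine ⟨insert {a} π, mem_partsJOf.2 ⟨insertBlock_isPartOn hπp
        (Finset.singleton_subset_iff.2 ha) (Finset.singleton_nonempty a), ?_⟩⟩
      rw [Finset.card_insert_of_notMem (notmem_insertBlock hπp (Finset.singleton_nonempty a)),
        hπcard]

lemma card_le_restrict_add {old T : Finset α} {ρ : Finset (Finset α)}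
    (hρ : IsPartOn (old ∪ T) ρ) : ρ.card ≤ (restrictPart ρ old).card + T.card := by
  have hsplit := Finset.card_filter_add_card_filter_not
    (s := ρ) (p := fun C => (C ∩ old).Nonempty)
  have h1 : (ρ.filter fun C => (C ∩ old).Nonempty).card ≤ (restrictPart ρ old).card := by
    apply Finset.card_le_card_of_injOn (fun C => C ∩ old)
    · intro C hC
      obtain ⟨hCρ, hCne⟩ := Finset.mem_filter.1 hC
      exact mem_restrictPart.2 ⟨hCne.ne_empty, C, hCρ, rfl⟩
    · intro C1 hC1 C2 hC2 he
      obtain ⟨hC1ρ, hC1ne⟩ := Finset.mem_filter.1 (Finset.mem_coe.1 hC1)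
      obtain ⟨hC2ρ, -⟩ := Finset.mem_filter.1 (Finset.mem_coe.1 hC2)
      obtain ⟨x, hx⟩ := hC1ne
      have he' : C1 ∩ old = C2 ∩ old := he
      have hx2 : x ∈ C2 ∩ old := he' ▸ hx
      exact hρ.eq_of_mem hC1ρ hC2ρ (Finset.mem_inter.1 hx).1 (Finset.mem_inter.1 hx2).1
  have h2 : (ρ.filter fun C => ¬(C ∩ old).Nonempty).card ≤ T.card := by
    set F := ρ.filter fun C => ¬(C ∩ old).Nonempty with hF
    have hdisj : ∀ B ∈ F, ∀ C ∈ F, B ≠ C → Disjoint (id B) (id C) := by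
      intro B hB C hC hne
      refine Finset.disjoint_left.2 fun x hxB hxC => hne ?_
      exact hρ.eq_of_mem (Finset.mem_filter.1 hB).1 (Finset.mem_filter.1 hC).1 hxB hxC
    calc F.card = ∑ _C ∈ F, 1 := by simp
      _ ≤ ∑ C ∈ F, C.card := Finset.sum_le_sum fun C hC =>
          (hρ.block_nonempty (Finset.mem_filter.1 hC).1).card_pos
      _ = (F.biUnion id).card := (Finset.card_biUnion hdisj).symm
      _ ≤ T.card := by
          apply Finset.card_le_card
          intro x hx
          obtain ⟨C, hC, hxC⟩ := Finset.mem_biUnion.1 hx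
          obtain ⟨hCρ, hCno⟩ := Finset.mem_filter.1 hC
          rcases Finset.mem_union.1 (hρ.bsubset hCρ hxC) with hxo | hxT
          · exact absurd ⟨x, Finset.mem_inter.2 ⟨hxC, hxo⟩⟩ hCno
          · exact hxT
  omega

end Sums

lemma oldSet_card (n m : ℕ) : (oldSet n m).card = n := by
  have himg : (oldSet n m).image Fin.val = Finset.range n := by
    ext x
    simp only [Finset.mem_image, Finset.mem_range, oldSet, Finset.mem_filter,
      Finset.mem_univ, true_and]
    constructor
    · rintro ⟨y, hy, rfl⟩
      exact hy
    · intro hx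
      exact ⟨⟨x, by omega⟩, hx, rfl⟩
  have hinj := Finset.card_image_of_injective (oldSet n m) (Fin.val_injective)
  rw [himg, Finset.card_range] at hinj
  omega

/-- expected number of re-observed old species, given only the number of blocks. -/
theorem looking_backward_estimator_incomplete
    (n m j : ℕ) (hn : 1 ≤ n) (hm : 1 ≤ m) (hj1 : 1 ≤ j) (hjn : j ≤ n)
    (σ : ℝ) (hσ1 : σ < 1) (hσ0 : σ ≠ 0)
    (V : ℕ → ℕ → ℝ) (hV11 : V 1 1 = 1)
    (hVnn : ∀ N k, 1 ≤ k → k ≤ N → 0 ≤ V N k)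
    (hVrec : ∀ N k, 1 ≤ k → k ≤ N →
      V N k = V (N + 1) (k + 1) + ((N : ℝ) - (k : ℝ) * σ) * V (N + 1) k)
    (hVnj : 0 < V n j) :
    condExpK σ V n m j (fun ρ => (Rcnt n m ρ : ℝ)) =
      (j : ℝ) -
        (1 / cgfc n j σ) *
          ∑ s ∈ Finset.Icc 1 (n - (j - 1)),
            (Nat.choose n s : ℝ) * cgfc s 1 σ * cgfc (n - s) (j - 1) σ *
              ∑ k ∈ Finset.range (m + 1),
                V (n + m) (j + k) / V n j *
                  (gfc m k σ (-(n : ℝ) + (s : ℝ) + ((j : ℝ) - 1) * σ) / σ ^ k) := by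
  classical
  set old : Finset (Fin (n + m)) := oldSet n m with hold
  have holdcard : old.card = n := oldSet_card n m
  have holdne : old.Nonempty := Finset.card_pos.1 (by omega)
  set T : Finset (Fin (n + m)) := Finset.univ \ old with hTdef
  have hunion : old ∪ T = Finset.univ := Finset.union_sdiff_of_subset (Finset.subset_univ old)
  have hdisjT : Disjoint T old := Finset.sdiff_disjoint
  have hTcard : T.card = m := by
    have h := Finset.card_sdiff_of_subset (Finset.subset_univ old)
    rw [Finset.card_univ, Fintype.card_fin, holdcard] at h
    rw [hTdef, h]
    omega
  -- notation shortcuts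
  set H : ℕ → ℝ := fun s0 => ∑ k ∈ Finset.range (m + 1),
      V (n + m) (j + k) * (gfc m k σ (-(n : ℝ) + (s0 : ℝ) + ((j : ℝ) - 1) * σ) / σ ^ k) with hH
  -- the partition function S
  set S : ℝ := ∑ π' ∈ partsJOf old j, ∏ C ∈ π', risingFac (1 - σ) (C.card - 1) with hSdef
  have hS : S = cgfc n j σ / σ ^ j := by
    rw [hSdef, sum_partsJOf_prod σ hσ0 old j, holdcard]
  have hSpos : 0 < S := by
    rw [hSdef]
    apply Finset.sum_pos
    · intro π hπ
      exact Finset.prod_pos fun C _ => risingFac_pos (by linarith) _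
    · exact partsJOf_nonempty j old hj1 (by omega)
  have hσj : (σ : ℝ) ^ j ≠ 0 := pow_ne_zero _ hσ0
  have hcg : cgfc n j σ = S * σ ^ j := by
    rw [hS]; field_simp
  have hcgne : cgfc n j σ ≠ 0 := by
    rw [hcg]
    exact mul_ne_zero (ne_of_gt hSpos) hσj
  have hVne : V n j ≠ 0 := ne_of_gt hVnj
  -- the denominator
  have hden : ∑ π' ∈ partsJOf (oldSet n m) j, gibbsW σ (V n) π' = V n j * S := by
    rw [← hold, hSdef, Finset.mul_sum]
    apply Finset.sum_congr rfl
    intro π hπ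
    simp only [gibbsW]
    rw [(mem_partsJOf.1 hπ).2]
  -- fibers
  have hfiber : ∀ π' ∈ partsJOf old j,
      (withJ n m j).filter (fun ρ => restrictPart ρ old = π')
        = (partsOn (old ∪ T)).filter (fun ρ => restrictPart ρ old = π') := by
    intro π' hπ'
    rw [hunion]
    ext ρ
    simp only [withJ, Finset.mem_filter, Finset.mem_univ, true_and, mem_partsOn]
    constructor
    · rintro ⟨⟨h1, _⟩, h3⟩
      exact ⟨h1, h3⟩
    · rintro ⟨h1, h3⟩
      refine ⟨⟨h1, ?_⟩, h3⟩
      rw [← hold, h3]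
      exact (mem_partsJOf.1 hπ').2
  have hmapsto : ∀ ρ ∈ withJ n m j, restrictPart ρ old ∈ partsJOf old j := by
    intro ρ hρ
    obtain ⟨h1, h2⟩ := (Finset.mem_filter.1 hρ).2
    exact mem_partsJOf.2 ⟨restrictPart_isPartOn h1 (Finset.subset_univ old), h2⟩
  -- Rcnt rewrite
  have hRcnt : ∀ π' ∈ partsJOf old j, ∀ ρ, IsPartOn Finset.univ ρ → restrictPart ρ old = π' →
      (Rcnt n m ρ : ℝ) = (j : ℝ) - ∑ Bi ∈ π', (if Bi ∈ ρ then (1 : ℝ) else 0) := by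
    intro π' hπ' ρ hρ hres
    obtain ⟨hπp, hπcard⟩ := mem_partsJOf.1 hπ'
    have key : ∀ Bi ∈ π', (¬ ∃ C ∈ ρ, Bi ⊆ C ∧ (C \ old) ≠ ∅) ↔ Bi ∈ ρ := by
      intro Bi hBi
      have hBir : Bi ∈ restrictPart ρ old := hres ▸ hBi
      obtain ⟨hBine, C0, hC0, hC0e⟩ := mem_restrictPart.1 hBir
      constructor
      · intro hno
        have hsub : Bi ⊆ C0 := hC0e ▸ Finset.inter_subset_left
        by_cases hd : (C0 \ old) = ∅
        · have hsubold : C0 ⊆ old := Finset.sdiff_eq_empty_iff_subset.1 hd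
          have heq : C0 ∩ old = C0 := Finset.inter_eq_left.2 hsubold
          rw [← hC0e, heq]
          exact hC0
        · exact absurd ⟨C0, hC0, hsub, hd⟩ hno
      · intro hBiρ
        rintro ⟨C, hC, hsub, hdne⟩
        obtain ⟨b, hb⟩ := Finset.nonempty_iff_ne_empty.2 hBine
        have hCBi : C = Bi := hρ.eq_of_mem hC hBiρ (hsub hb) hb
        apply hdne
        rw [hCBi, Finset.sdiff_eq_empty_iff_subset]
        exact hπp.bsubset hBi
    have hsplit := Finset.card_filter_add_card_filter_not
      (s := π') (p := fun Bi => ∃ C ∈ ρ, Bi ⊆ C ∧ (C \ old) ≠ ∅)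
    have hneg : π'.filter (fun Bi => ¬ ∃ C ∈ ρ, Bi ⊆ C ∧ (C \ old) ≠ ∅)
        = π'.filter (fun Bi => Bi ∈ ρ) :=
      Finset.filter_congr (fun Bi hBi => key Bi hBi)
    have hcount : ∑ Bi ∈ π', (if Bi ∈ ρ then (1 : ℝ) else 0)
        = ((π'.filter (fun Bi => Bi ∈ ρ)).card : ℝ) := by
      simp [Finset.filter_mem_eq_inter]
    have hRc : (Rcnt n m ρ : ℝ)
        = ((π'.filter (fun Bi => ∃ C ∈ ρ, Bi ⊆ C ∧ (C \ old) ≠ ∅)).card : ℝ) := by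
      unfold Rcnt
      rw [← hold, hres]
    rw [hRc, hcount]
    rw [hneg, hπcard] at hsplit
    have hsplit' : ((π'.filter (fun Bi => ∃ C ∈ ρ, Bi ⊆ C ∧ (C \ old) ≠ ∅)).card : ℝ)
        + ((π'.filter (fun Bi => Bi ∈ ρ)).card : ℝ) = (j : ℝ) := by
      exact_mod_cast congrArg (fun z : ℕ => (z : ℝ)) hsplit
    linarith
  -- consistency sum per fiber
  have hA : ∀ π' ∈ partsJOf old j,
      ∑ ρ ∈ (withJ n m j).filter (fun ρ => restrictPart ρ old = π'),
        gibbsW σ (V (n + m)) ρ = V n j * ∏ C ∈ π', risingFac (1 - σ) (C.card - 1) := by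
    intro π' hπ'
    obtain ⟨hπp, hπcard⟩ := mem_partsJOf.1 hπ'
    have h0 := sum_ext_weight σ V hVrec old holdne π' hπp T hdisjT
    rw [holdcard, hTcard, hπcard] at h0
    rw [hfiber π' hπ']
    rw [← h0]
    apply Finset.sum_congr rfl
    intro ρ _
    rfl
  -- untouched sum per fiber and marked block
  have hB : ∀ π' ∈ partsJOf old j, ∀ Bi ∈ π',
      ∑ ρ ∈ (withJ n m j).filter (fun ρ => restrictPart ρ old = π'),
        (if Bi ∈ ρ then (1 : ℝ) else 0) * gibbsW σ (V (n + m)) ρ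
      = (∏ C ∈ π', risingFac (1 - σ) (C.card - 1)) * H Bi.card := by
    intro π' hπ' Bi hBi
    obtain ⟨hπp, hπcard⟩ := mem_partsJOf.1 hπ'
    rw [hfiber π' hπ']
    have hstep1 : ∑ ρ ∈ (partsOn (old ∪ T)).filter (fun ρ => restrictPart ρ old = π'),
        (if Bi ∈ ρ then (1 : ℝ) else 0) * gibbsW σ (V (n + m)) ρ
        = ∑ ρ ∈ (partsOn (old ∪ T)).filter (fun ρ => restrictPart ρ old = π' ∧ Bi ∈ ρ),
            gibbsW σ (V (n + m)) ρ := by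
      rw [← Finset.filter_filter, Finset.sum_filter (p := fun ρ => Bi ∈ ρ)]
      apply Finset.sum_congr rfl
      intro ρ _
      by_cases h : Bi ∈ ρ
      · rw [if_pos h, if_pos h, one_mul]
      · rw [if_neg h, if_neg h, zero_mul]
    rw [hstep1]
    have hmaps2 : ∀ ρ ∈ (partsOn (old ∪ T)).filter (fun ρ => restrictPart ρ old = π' ∧ Bi ∈ ρ),
        ρ.card - j ∈ Finset.range (m + 1) := by
      intro ρ hρ2
      have hmem := Finset.mem_filter.1 hρ2
      have hρp := mem_partsOn.1 hmem.1
      have hub := card_le_restrict_add hρp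
      rw [hmem.2.1, hπcard, hTcard] at hub
      exact Finset.mem_range.2 (by omega)
    rw [← Finset.sum_fiberwise_of_maps_to hmaps2 (fun ρ => gibbsW σ (V (n + m)) ρ)]
    have hsets : ∀ k ∈ Finset.range (m + 1),
        ((partsOn (old ∪ T)).filter (fun ρ => restrictPart ρ old = π' ∧ Bi ∈ ρ)).filter
            (fun ρ => ρ.card - j = k)
          = (partsOn (old ∪ T)).filter
              (fun ρ => restrictPart ρ old = π' ∧ Bi ∈ ρ ∧ ρ.card = π'.card + k) := by
      intro k _
      rw [Finset.filter_filter]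
      apply Finset.filter_congr
      intro ρ hρm
      have hρp := mem_partsOn.1 hρm
      constructor
      · rintro ⟨⟨h1, h2⟩, h3⟩
        have hge : π'.card ≤ ρ.card := by
          rw [← h1]
          exact restrictPart_card_le
        exact ⟨h1, h2, by omega⟩
      · rintro ⟨h1, h2, h3⟩
        exact ⟨⟨h1, h2⟩, by omega⟩
    have hterm : ∀ k ∈ Finset.range (m + 1),
        (∑ ρ ∈ ((partsOn (old ∪ T)).filter
            (fun ρ => restrictPart ρ old = π' ∧ Bi ∈ ρ)).filter (fun ρ => ρ.card - j = k),
          gibbsW σ (V (n + m)) ρ)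
        = (∏ C ∈ π', risingFac (1 - σ) (C.card - 1)) *
            (V (n + m) (j + k) * (gfc m k σ (-(n : ℝ) + (Bi.card : ℝ) + ((j : ℝ) - 1) * σ) / σ ^ k)) := by
      intro k hk
      rw [hsets k hk]
      have hw : ∀ ρ ∈ (partsOn (old ∪ T)).filter
          (fun ρ => restrictPart ρ old = π' ∧ Bi ∈ ρ ∧ ρ.card = π'.card + k),
          gibbsW σ (V (n + m)) ρ = V (n + m) (j + k) * ∏ C ∈ ρ, risingFac (1 - σ) (C.card - 1) := by
        intro ρ hρ2
        have hcardρ : ρ.card = π'.card + k := (Finset.mem_filter.1 hρ2).2.2.2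
        simp only [gibbsW]
        rw [hcardρ, hπcard]
      rw [Finset.sum_congr rfl hw, ← Finset.mul_sum]
      have h1 := sum_ext_untouched σ hσ0 old π' hπp Bi hBi T hdisjT k
      rw [holdcard, hTcard] at h1
      rw [h1, hπcard]
      push_cast
      try ring
    rw [Finset.sum_congr rfl hterm, ← Finset.mul_sum]
  -- numerator decomposition
  have hnum : ∑ ρ ∈ withJ n m j, (Rcnt n m ρ : ℝ) * gibbsW σ (V (n + m)) ρ
      = (j : ℝ) * (V n j * S)
        - ∑ π' ∈ partsJOf old j, ∑ Bi ∈ π', (∏ C ∈ π', risingFac (1 - σ) (C.card - 1)) * H Bi.card := by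
    rw [← Finset.sum_fiberwise_of_maps_to hmapsto
      (fun ρ => (Rcnt n m ρ : ℝ) * gibbsW σ (V (n + m)) ρ)]
    have hper : ∀ π' ∈ partsJOf old j,
        ∑ ρ ∈ (withJ n m j).filter (fun ρ => restrictPart ρ old = π'),
          (Rcnt n m ρ : ℝ) * gibbsW σ (V (n + m)) ρ
        = (j : ℝ) * (V n j * ∏ C ∈ π', risingFac (1 - σ) (C.card - 1))
          - ∑ Bi ∈ π', (∏ C ∈ π', risingFac (1 - σ) (C.card - 1)) * H Bi.card := by
      intro π' hπ'
      have hrw : ∀ ρ ∈ (withJ n m j).filter (fun ρ => restrictPart ρ old = π'),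
          (Rcnt n m ρ : ℝ) * gibbsW σ (V (n + m)) ρ
          = (j : ℝ) * gibbsW σ (V (n + m)) ρ
            - ∑ Bi ∈ π', (if Bi ∈ ρ then (1 : ℝ) else 0) * gibbsW σ (V (n + m)) ρ := by
        intro ρ hρ2
        obtain ⟨hρw, hres⟩ := Finset.mem_filter.1 hρ2
        have hpart : IsPartOn Finset.univ ρ := ((Finset.mem_filter.1 hρw).2).1
        rw [hRcnt π' hπ' ρ hpart hres, sub_mul, Finset.sum_mul]
      rw [Finset.sum_congr rfl hrw, Finset.sum_sub_distrib, ← Finset.mul_sum, hA π' hπ']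
      congr 1
      rw [Finset.sum_comm]
      apply Finset.sum_congr rfl
      intro Bi hBi
      exact hB π' hπ' Bi hBi
    rw [Finset.sum_congr rfl hper, Finset.sum_sub_distrib, ← Finset.mul_sum, ← Finset.mul_sum,
      ← hSdef]
  -- regroup the second term by block size
  have hsize : ∀ π' ∈ partsJOf old j, ∀ Bi ∈ π', Bi.card ∈ Finset.Icc 1 (n - (j - 1)) := by
    intro π' hπ' Bi hBi
    obtain ⟨hπp, hπcard⟩ := mem_partsJOf.1 hπ'
    have h1 : 1 ≤ Bi.card := (hπp.block_nonempty hBi).card_pos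
    have hsum : ∑ C ∈ π', C.card = n := by rw [hπp.sum_card, holdcard]
    have hsplit : Bi.card + ∑ C ∈ π'.erase Bi, C.card = n := by
      rw [← Finset.add_sum_erase _ _ hBi] at hsum
      exact hsum
    have hlow : (π'.erase Bi).card ≤ ∑ C ∈ π'.erase Bi, C.card := by
      calc (π'.erase Bi).card = ∑ _C ∈ π'.erase Bi, 1 := by simp
        _ ≤ ∑ C ∈ π'.erase Bi, C.card := Finset.sum_le_sum fun C hC =>
            (hπp.block_nonempty (Finset.mem_of_mem_erase hC)).card_pos
    have hec : (π'.erase Bi).card = j - 1 := by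
      rw [Finset.card_erase_of_mem hBi, hπcard]
    exact Finset.mem_Icc.2 ⟨h1, by omega⟩
  have hterm2 : ∑ π' ∈ partsJOf old j, ∑ Bi ∈ π', (∏ C ∈ π', risingFac (1 - σ) (C.card - 1)) * H Bi.card
      = ∑ s0 ∈ Finset.Icc 1 (n - (j - 1)),
          H s0 * ((n.choose s0 : ℝ) * risingFac (1 - σ) (s0 - 1) *
            (cgfc (n - s0) (j - 1) σ / σ ^ (j - 1))) := by
    have hre : ∀ π' ∈ partsJOf old j,
        ∑ Bi ∈ π', (∏ C ∈ π', risingFac (1 - σ) (C.card - 1)) * H Bi.card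
        = ∑ s0 ∈ Finset.Icc 1 (n - (j - 1)),
            ∑ Bi ∈ π'.filter (fun B => B.card = s0), (∏ C ∈ π', risingFac (1 - σ) (C.card - 1)) * H s0 := by
      intro π' hπ'
      rw [← Finset.sum_fiberwise_of_maps_to (hsize π' hπ')
        (fun Bi => (∏ C ∈ π', risingFac (1 - σ) (C.card - 1)) * H Bi.card)]
      apply Finset.sum_congr rfl
      intro s0 _
      apply Finset.sum_congr rfl
      intro Bi hBi2
      rw [(Finset.mem_filter.1 hBi2).2]
    rw [Finset.sum_congr rfl hre, Finset.sum_comm]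
    apply Finset.sum_congr rfl
    intro s0 hs0
    obtain ⟨hs01, hs02⟩ := Finset.mem_Icc.1 hs0
    have hmarked := sum_marked σ hσ0 old j s0 hj1 hs01
    rw [holdcard] at hmarked
    rw [← hmarked, Finset.mul_sum]
    apply Finset.sum_congr rfl
    intro π' hπ'
    rw [← Finset.sum_mul]
    ring
  -- put everything together
  simp only [condExpK]
  rw [hden, hnum, hterm2]
  have hinnerH : ∀ s0 : ℕ, (∑ k ∈ Finset.range (m + 1),
      V (n + m) (j + k) / V n j *
        (gfc m k σ (-(n : ℝ) + (s0 : ℝ) + ((j : ℝ) - 1) * σ) / σ ^ k)) = H s0 / V n j := by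
    intro s0
    simp only [hH]
    rw [Finset.sum_div]
    apply Finset.sum_congr rfl
    intro k _
    ring
  have hsumright : ∑ s0 ∈ Finset.Icc 1 (n - (j - 1)),
      (n.choose s0 : ℝ) * cgfc s0 1 σ * cgfc (n - s0) (j - 1) σ *
        ∑ k ∈ Finset.range (m + 1),
          V (n + m) (j + k) / V n j *
            (gfc m k σ (-(n : ℝ) + (s0 : ℝ) + ((j : ℝ) - 1) * σ) / σ ^ k)
      = ∑ s0 ∈ Finset.Icc 1 (n - (j - 1)),
          (n.choose s0 : ℝ) * cgfc s0 1 σ * cgfc (n - s0) (j - 1) σ * (H s0 / V n j) :=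
    Finset.sum_congr rfl (fun s0 _ => by rw [hinnerH s0])
  rw [hsumright]
  -- final algebra
  have hSne : S ≠ 0 := ne_of_gt hSpos
  have hVS : V n j * S ≠ 0 := mul_ne_zero hVne hSne
  rw [sub_div]
  congr 1
  · rw [mul_div_assoc, div_self hVS, mul_one]
  · rw [Finset.sum_div,
      Finset.mul_sum (Finset.Icc 1 (n - (j - 1)))
        (fun s0 => (n.choose s0 : ℝ) * cgfc s0 1 σ * cgfc (n - s0) (j - 1) σ * (H s0 / V n j))
        (1 / cgfc n j σ)]
    apply Finset.sum_congr rfl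
    intro s0 hs0
    obtain ⟨hs01, -⟩ := Finset.mem_Icc.1 hs0
    rw [cgfc_one s0 hs01 σ]
    have hj' : j - 1 + 1 = j := by omega
    have hσj1 : (σ : ℝ) ^ (j - 1) ≠ 0 := pow_ne_zero _ hσ0
    have hpow : (σ : ℝ) ^ j = σ ^ (j - 1) * σ := by
      rw [← pow_succ, hj']
    rw [hcg, hpow]
    field_simp
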